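/- arXiv:2405.08063 — 8 statements merged into one kernel-verified Lean document; each statement's English description precedes it below -/
import Mathlib

section
/- (Generalized homological perturbation lemma, Theorem A.2 of the paper.) With the SDR datum, the perturbation data, and the perturbed maps as defined in the context, all eight SDR equations hold for the perturbed data: (1) d̃_W ∘ d̃_W = 0; (2) d̃_W ∘ π̃ = π̃ ∘ d̃_V; (3) ι̃ ∘ d̃_W = d̃_V ∘ ι̃; (4) η̃ ∘ d̃_V + d̃_V ∘ η̃ = ι̃ ∘ π̃ − id_V; (5) π̃ ∘ ι̃ = id_W; (6) η̃ ∘ η̃ = 0; (7) η̃ ∘ ι̃ = 0; (8) π̃ ∘ η̃ = 0. -/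
open TensorProduct

/-- Generalized homological perturbation lemma (Theorem A.2): all eight SDR
equations hold for the perturbed data. -/
theorem stmt_0 {R V V' W W' : Type*} [CommRing R]
    [AddCommGroup V] [Module R V] [AddCommGroup V'] [Module R V']
    [AddCommGroup W] [Module R W] [AddCommGroup W'] [Module R W']
    -- SDR datum
    (dV : V →ₗ[R] V) (dW : W →ₗ[R] W)
    (π : V →ₗ[R] W) (ι : W →ₗ[R] V) (η : V →ₗ[R] V)
    (hdV : dV ∘ₗ dV = 0) (hdW : dW ∘ₗ dW = 0)
    (hπ : π ∘ₗ dV = dW ∘ₗ π) (hι : dV ∘ₗ ι = ι ∘ₗ dW)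
    (hHK : ι ∘ₗ π - LinearMap.id = η ∘ₗ dV + dV ∘ₗ η)
    (hπι : π ∘ₗ ι = LinearMap.id)
    (hηη : η ∘ₗ η = 0) (hηι : η ∘ₗ ι = 0) (hπη : π ∘ₗ η = 0)
    -- perturbation data
    (δV : V →ₗ[R] V' ⊗[R] V) (g : V' ⊗[R] V →ₗ[R] V)
    (π' : V' →ₗ[R] W') (g' : W' ⊗[R] W →ₗ[R] W)
    (A : V →ₗ[R] V)
    (hA₁ : A ∘ₗ (LinearMap.id - η ∘ₗ g ∘ₗ δV) = LinearMap.id)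
    (hA₂ : (LinearMap.id - η ∘ₗ g ∘ₗ δV) ∘ₗ A = LinearMap.id)
    (hpert : (dV + g ∘ₗ δV) ∘ₗ (dV + g ∘ₗ δV) = 0)
    (hcompat : g' ∘ₗ TensorProduct.map π' π = π ∘ₗ g)
    -- perturbed maps
    (dV' : V →ₗ[R] V) (hdV' : dV' = dV + g ∘ₗ δV)
    (δW : W →ₗ[R] W' ⊗[R] W)
    (hδW : δW = TensorProduct.map π' π ∘ₗ δV ∘ₗ A ∘ₗ ι)
    (dW' : W →ₗ[R] W) (hdW' : dW' = dW + g' ∘ₗ δW)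
    (ι' : W →ₗ[R] V) (hι' : ι' = ι + η ∘ₗ g ∘ₗ δV ∘ₗ A ∘ₗ ι)
    (πt : V →ₗ[R] W) (hπt : πt = π + π ∘ₗ g ∘ₗ δV ∘ₗ A ∘ₗ η)
    (η' : V →ₗ[R] V) (hη' : η' = η + η ∘ₗ g ∘ₗ δV ∘ₗ A ∘ₗ η) :
    dW' ∘ₗ dW' = 0 ∧
    dW' ∘ₗ πt = πt ∘ₗ dV' ∧
    ι' ∘ₗ dW' = dV' ∘ₗ ι' ∧
    η' ∘ₗ dV' + dV' ∘ₗ η' = ι' ∘ₗ πt - LinearMap.id ∧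
    πt ∘ₗ ι' = LinearMap.id ∧
    η' ∘ₗ η' = 0 ∧
    η' ∘ₗ ι' = 0 ∧
    πt ∘ₗ η' = 0 := by
  set B : V →ₗ[R] V := g ∘ₗ δV with hB
  set s : V →ₗ[R] V := B ∘ₗ A with hs
  have hsm : s = B * A := hs
  -- inverse identities
  have hA2m : A - η * s = 1 := hA₂
  have hF3 : A = 1 + η * s := eq_add_of_sub_eq hA2m
  have hA1m : A * (1 - η * B) = 1 := hA₁
  have hF0 : A = 1 + A * (η * B) := by
    have h := hA1m
    rw [mul_sub, mul_one] at h
    exact eq_add_of_sub_eq (by rw [← mul_assoc]; exact h)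
  have hF1 : s = B + s * (η * B) := by
    nth_rewrite 1 [hsm]
    nth_rewrite 1 [hF0]
    rw [mul_add, mul_one, ← mul_assoc, ← hsm]
  have hF2 : s = B + B * (η * s) := by
    nth_rewrite 1 [hsm]
    nth_rewrite 1 [hF3]
    rw [mul_add, mul_one]
  have hdVm : dV * dV = 0 := hdV
  have hpm : (dV + B) * (dV + B) = 0 := hpert
  have hFe : dV * B + B * dV + B * B = 0 := by
    have h2 : dV * B + B * dV + B * B = (dV + B) * (dV + B) - dV * dV := by noncomm_ring
    rw [h2, hpm, hdVm, sub_zero]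
  have hum : ι ∘ₗ π = η * dV + dV * η + 1 := eq_add_of_sub_eq hHK
  -- key lemma K
  have e1 : (1 + s * η) * B = s := by
    rw [add_mul, one_mul, mul_assoc]; exact hF1.symm
  have e2 : (dV + B) * B = -(B * dV) := by
    have h2 : (dV + B) * B = (dV * B + B * dV + B * B) - B * dV := by noncomm_ring
    rw [h2, hFe, zero_sub]
  have e3 : s * s = (1 + s * η) * (B * s) := by
    nth_rewrite 1 [hF1]
    noncomm_ring
  have e4 : (dV + B) * s = -(B * (dV * A)) := by
    rw [hsm, ← mul_assoc, e2]
    noncomm_ring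
  have hKu : dV * s + s * dV + s * (ι ∘ₗ π) * s = 0 := by
    calc dV * s + s * dV + s * (ι ∘ₗ π) * s
        = dV * s + s * dV + s * (η * dV + dV * η + 1) * s := by rw [hum]
      _ = (1 + s * η) * (dV * s) + s * s + (s * dV) * (1 + η * s) := by noncomm_ring
      _ = (1 + s * η) * (dV * s) + (1 + s * η) * (B * s) + (s * dV) * (1 + η * s) := by
          rw [e3]
      _ = (1 + s * η) * ((dV + B) * s) + (s * dV) * (1 + η * s) := by noncomm_ring
      _ = (1 + s * η) * ((dV + B) * s) + (s * dV) * A := by rw [← hF3]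
      _ = (1 + s * η) * (-(B * (dV * A))) + (s * dV) * A := by rw [e4]
      _ = -(((1 + s * η) * B) * (dV * A)) + (s * dV) * A := by noncomm_ring
      _ = -(s * (dV * A)) + (s * dV) * A := by rw [e1]
      _ = 0 := by noncomm_ring
  have hKu' : dV * s + s * dV + s * (η * dV + dV * η + 1) * s = 0 := by
    rw [← hum]; exact hKu
  have hK2a : s * (ι ∘ₗ π) * s = -(dV * s + s * dV) := by
    have := hKu
    rw [add_comm (dV * s + s * dV)] at this
    rw [add_eq_zero_iff_eq_neg] at this
    exact this
  have K2 : dV * (1 + s * η) + (s * (ι ∘ₗ π)) * (1 + s * η) = (1 + s * η) * (dV + B) := by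
    calc dV * (1 + s * η) + (s * (ι ∘ₗ π)) * (1 + s * η)
        = dV + dV * (s * η) + s * (ι ∘ₗ π) + (s * (ι ∘ₗ π) * s) * η := by noncomm_ring
      _ = dV + dV * (s * η) + s * (ι ∘ₗ π) + (-(dV * s + s * dV)) * η := by rw [hK2a]
      _ = dV + s * (ι ∘ₗ π) - (s * dV) * η := by noncomm_ring
      _ = dV + s * (η * dV + dV * η + 1) - (s * dV) * η := by rw [hum]
      _ = dV + s + s * (η * dV) := by noncomm_ring
      _ = dV + (B + s * (η * B)) + s * (η * dV) := by rw [← hF1]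
      _ = (1 + s * η) * (dV + B) := by noncomm_ring
  have K3 : A * (dV + (ι ∘ₗ π) * s) = (dV + B) * A := by
    calc A * (dV + (ι ∘ₗ π) * s)
        = (1 + η * s) * (dV + (η * dV + dV * η + 1) * s) := by rw [hF3, hum]
      _ = dV + s + dV * (η * s) + η * (dV * s + s * dV + s * (η * dV + dV * η + 1) * s) := by
          noncomm_ring
      _ = dV + s + dV * (η * s) := by rw [hKu']; noncomm_ring
      _ = dV + (B + B * (η * s)) + dV * (η * s) := by rw [← hF2]
      _ = (dV + B) * A := by rw [hF3]; noncomm_ring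
  have hAη : A * η = η + η * (s * η) := by rw [hF3]; noncomm_ring
  have hAus : (A * (ι ∘ₗ π)) * s = s + dV * (η * s) - η * (s * dV) := by
    calc (A * (ι ∘ₗ π)) * s
        = (1 + η * s) * ((η * dV + dV * η + 1) * s) := by rw [hF3, hum]; noncomm_ring
      _ = dV * (η * s) + s + η * (dV * s + s * dV + s * (η * dV + dV * η + 1) * s)
            - η * (s * dV) := by noncomm_ring
      _ = s + dV * (η * s) - η * (s * dV) := by rw [hKu']; noncomm_ring
  have eq4 : (A * η) * (dV + B) + (dV + B) * (A * η)
      = (A * (ι ∘ₗ π)) * (1 + s * η) - 1 := by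
    have hR : (A * (ι ∘ₗ π)) * (1 + s * η) - 1
        = A * (ι ∘ₗ π) + ((A * (ι ∘ₗ π)) * s) * η - 1 := by noncomm_ring
    calc (A * η) * (dV + B) + (dV + B) * (A * η)
        = (η + η * (s * η)) * (dV + B) + (dV + B) * (η + η * (s * η)) := by rw [hAη]
      _ = η * dV + dV * η + η * (s * η) * dV + dV * (η * (s * η))
            + η * (B + s * (η * B)) + (B + B * (η * s)) * η := by noncomm_ring
      _ = η * dV + dV * η + η * (s * η) * dV + dV * (η * (s * η)) + η * s + s * η := by
          rw [← hF1, ← hF2]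
      _ = (A * (ι ∘ₗ π)) * (1 + s * η) - 1 := by
          rw [hR, hAus, hF3, hum]; noncomm_ring
  -- canonical composition forms for the perturbed maps
  have hdWA : dW' = dW + π ∘ₗ s ∘ₗ ι := by
    rw [hdW', hδW, hs, hB]
    simp only [← LinearMap.comp_assoc]
    rw [hcompat]
  have hι'S : ι' = ι + η ∘ₗ s ∘ₗ ι := by
    rw [hι', hs, hB]; simp only [LinearMap.comp_assoc]
  have hπtS : πt = π + π ∘ₗ s ∘ₗ η := by
    rw [hπt, hs, hB]; simp only [LinearMap.comp_assoc]
  have hη'S : η' = η + η ∘ₗ s ∘ₗ η := by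
    rw [hη', hs, hB]; simp only [LinearMap.comp_assoc]
  have hι'A : ι' = A ∘ₗ ι := by
    rw [hι'S, hF3]; ext w; simp [Module.End.mul_apply]
  have hπtA : πt = π ∘ₗ (1 + s * η) := by
    rw [hπtS]; ext v; simp [Module.End.mul_apply]
  have hη'A : η' = A ∘ₗ η := by
    rw [hη'S, hF3]; ext v; simp [Module.End.mul_apply]
  -- pointwise facts
  have sπd : ∀ v, dW (π v) = π (dV v) := fun v => (LinearMap.congr_fun hπ v).symm
  have sιd : ∀ w, ι (dW w) = dV (ι w) := fun w => (LinearMap.congr_fun hι w).symm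
  have sdW0 : ∀ w, dW (dW w) = 0 := fun w => LinearMap.congr_fun hdW w
  have sπι : ∀ w, π (ι w) = w := fun w => LinearMap.congr_fun hπι w
  have sπη : ∀ v, π (η v) = 0 := fun v => LinearMap.congr_fun hπη v
  have sηι : ∀ w, η (ι w) = 0 := fun w => LinearMap.congr_fun hηι w
  have sηη : ∀ v, η (η v) = 0 := fun v => LinearMap.congr_fun hηη v
  have pdW : ∀ w, dW' w = dW w + π (s (ι w)) := fun w => by rw [hdWA]; rfl
  have pπt : ∀ v, πt v = π (v + s (η v)) := fun v => by rw [hπtA]; rfl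
  have pι' : ∀ w, ι' w = A (ι w) := fun w => by rw [hι'A]; rfl
  have pdV' : ∀ v, dV' v = dV v + B v := fun v => by rw [hdV']; rfl
  have pι's : ∀ w, ι' w = ι w + η (s (ι w)) := fun w => by rw [hι'S]; rfl
  have pπts : ∀ v, πt v = π v + π (s (η v)) := fun v => by rw [hπtS]; rfl
  have pη's : ∀ v, η' v = η v + η (s (η v)) := fun v => by rw [hη'S]; rfl
  -- goal (1)
  have g1 : dW' ∘ₗ dW' = 0 := by
    ext w
    have hx := LinearMap.congr_fun hKu (ι w)
    simp only [LinearMap.add_apply, Module.End.mul_apply, LinearMap.comp_apply,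
      LinearMap.zero_apply] at hx
    have hx2 := congrArg π hx
    simp only [map_add, map_zero] at hx2
    show dW' (dW' w) = 0
    rw [pdW, pdW]
    simp only [map_add, sdW0, sπd, sιd, zero_add]
    abel_nf at hx2 ⊢
    exact hx2
  -- goal (2)
  have g2 : dW' ∘ₗ πt = πt ∘ₗ dV' := by
    ext v
    have k2v := LinearMap.congr_fun K2 v
    simp only [LinearMap.add_apply, Module.End.mul_apply, Module.End.one_apply,
      LinearMap.comp_apply] at k2v
    show dW' (πt v) = πt (dV' v)
    calc dW' (πt v) = dW (πt v) + π (s (ι (πt v))) := pdW _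
      _ = π (dV (v + s (η v))) + π (s (ι (π (v + s (η v))))) := by rw [pπt, sπd]
      _ = π (dV (v + s (η v)) + s (ι (π (v + s (η v))))) := (map_add π _ _).symm
      _ = π (dV v + B v + s (η (dV v + B v))) := by rw [k2v]
      _ = πt (dV' v) := by rw [pπt, pdV']
  -- goal (3)
  have g3 : ι' ∘ₗ dW' = dV' ∘ₗ ι' := by
    ext w
    have k3v := LinearMap.congr_fun K3 (ι w)
    simp only [LinearMap.add_apply, Module.End.mul_apply, LinearMap.comp_apply] at k3v
    show ι' (dW' w) = dV' (ι' w)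
    calc ι' (dW' w) = A (ι (dW' w)) := pι' _
      _ = A (ι (dW w + π (s (ι w)))) := by rw [pdW]
      _ = A (ι (dW w) + ι (π (s (ι w)))) := by rw [map_add]
      _ = A (dV (ι w) + ι (π (s (ι w)))) := by rw [sιd]
      _ = dV (A (ι w)) + B (A (ι w)) := k3v
      _ = dV' (ι' w) := by rw [pι', pdV']
  -- goal (4)
  have g4 : η' ∘ₗ dV' + dV' ∘ₗ η' = ι' ∘ₗ πt - LinearMap.id := by
    rw [hη'A, hdV', hι'A, hπtA]
    exact eq4
  -- goal (5)
  have g5 : πt ∘ₗ ι' = LinearMap.id := by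
    ext w
    simp [pπts, pι's, map_add, map_zero, sπι, sπη, sηι, sηη]
  -- goal (6)
  have g6 : η' ∘ₗ η' = 0 := by
    ext v
    simp [pη's, map_add, map_zero, sηη]
  -- goal (7)
  have g7 : η' ∘ₗ ι' = 0 := by
    ext w
    simp [pη's, pι's, map_add, map_zero, sηη, sηι]
  -- goal (8)
  have g8 : πt ∘ₗ η' = 0 := by
    ext v
    simp [pπts, pη's, map_add, map_zero, sπη, sηη]
  exact ⟨g1, g2, g3, g4, g5, g6, g7, g8⟩
end

section
/- With the SDR datum, perturbation, and perturbed maps as defined in the context, the perturbed differential on W squares to zero: d̃_W ∘ d̃_W = 0. -/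
private theorem aux_ring {S : Type*} [Ring S] (d e a h : S)
    (hZ1 : d*e + e*d + e*e = 0) (hZ2 : a*(h*e) = a - 1) (hZ3 : h*e*a = a - 1) :
    d*(e*a) + (e*a)*d + (e*a)*(((h*d + d*h) + 1)*(e*a)) = 0 := by
  have key : d*(e*a) + (e*a)*d + (e*a)*(((h*d + d*h) + 1)*(e*a))
      = (d*e+e*d+e*e)*a + e*((a*h)*((d*e+e*d+e*e)*a))
        - e*((a*(h*e) - (a-1))*(d*a)) - e*((a*(h*e) - (a-1))*(e*a))
        + e*((a*d)*(h*e*a - (a-1))) := by noncomm_ring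
  rw [key, hZ1, hZ2, hZ3]
  noncomm_ring

/-- Homological perturbation lemma (single-space perturbation version), conclusion 1. -/
theorem stmt_1 {R V W : Type*} [CommRing R]
    [AddCommGroup V] [Module R V] [AddCommGroup W] [Module R W]
    (dV : V →ₗ[R] V) (dW : W →ₗ[R] W)
    (π : V →ₗ[R] W) (ι : W →ₗ[R] V) (η : V →ₗ[R] V)
    (hdV : dV ∘ₗ dV = 0) (hdW : dW ∘ₗ dW = 0)
    (hπ : π ∘ₗ dV = dW ∘ₗ π) (hι : dV ∘ₗ ι = ι ∘ₗ dW)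
    (hHK : ι ∘ₗ π - LinearMap.id = η ∘ₗ dV + dV ∘ₗ η)
    (hπι : π ∘ₗ ι = LinearMap.id)
    (hηη : η ∘ₗ η = 0) (hηι : η ∘ₗ ι = 0) (hπη : π ∘ₗ η = 0)
    (δ : V →ₗ[R] V)
    (hpert : (dV + δ) ∘ₗ (dV + δ) = 0)
    (A : V →ₗ[R] V)
    (hA₁ : A ∘ₗ (LinearMap.id - η ∘ₗ δ) = LinearMap.id)
    (hA₂ : (LinearMap.id - η ∘ₗ δ) ∘ₗ A = LinearMap.id)
    (dV' : V →ₗ[R] V) (hdV' : dV' = dV + δ)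
    (dW' : W →ₗ[R] W) (hdW' : dW' = dW + π ∘ₗ δ ∘ₗ A ∘ₗ ι)
    (ι' : W →ₗ[R] V) (hι' : ι' = ι + η ∘ₗ δ ∘ₗ A ∘ₗ ι)
    (π' : V →ₗ[R] W) (hπ' : π' = π + π ∘ₗ δ ∘ₗ A ∘ₗ η)
    (η' : V →ₗ[R] V) (hη' : η' = η + η ∘ₗ δ ∘ₗ A ∘ₗ η) :
    dW' ∘ₗ dW' = 0 := by
  -- convert hypotheses to the `Module.End` ring language
  have hpert' : (dV + δ) * (dV + δ) = 0 := hpert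
  have hdVm : dV * dV = 0 := hdV
  have hA₁' : A * (1 - η * δ) = 1 := hA₁
  have hA₂' : (1 - η * δ) * A = 1 := hA₂
  have hZ1 : dV*δ + δ*dV + δ*δ = 0 := by
    have h : dV*δ + δ*dV + δ*δ = (dV+δ)*(dV+δ) - dV*dV := by noncomm_ring
    rw [h, hpert', hdVm, sub_zero]
  have hZ2 : A*(η*δ) = A - 1 := by rw [← hA₁']; noncomm_ring
  have hZ3 : η*δ*A = A - 1 := by rw [← hA₂']; noncomm_ring
  have key2 : dV ∘ₗ (δ ∘ₗ A) + (δ ∘ₗ A) ∘ₗ dV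
      + (δ ∘ₗ A) ∘ₗ ((ι ∘ₗ π) ∘ₗ (δ ∘ₗ A)) = 0 := by
    rw [eq_add_of_sub_eq hHK]
    exact aux_ring dV δ A η hZ1 hZ2 hZ3
  calc dW' ∘ₗ dW'
      = dW ∘ₗ dW + (dW ∘ₗ π) ∘ₗ (δ ∘ₗ (A ∘ₗ ι))
        + ((π ∘ₗ δ) ∘ₗ A) ∘ₗ (ι ∘ₗ dW)
        + (((π ∘ₗ δ) ∘ₗ A) ∘ₗ (ι ∘ₗ π)) ∘ₗ ((δ ∘ₗ A) ∘ₗ ι) := by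
        rw [hdW']
        simp only [LinearMap.add_comp, LinearMap.comp_add, LinearMap.comp_assoc]
        abel
    _ = dW ∘ₗ dW + (π ∘ₗ dV) ∘ₗ (δ ∘ₗ (A ∘ₗ ι))
        + ((π ∘ₗ δ) ∘ₗ A) ∘ₗ (dV ∘ₗ ι)
        + (((π ∘ₗ δ) ∘ₗ A) ∘ₗ (ι ∘ₗ π)) ∘ₗ ((δ ∘ₗ A) ∘ₗ ι) := by
        rw [← hπ, ← hι]
    _ = π ∘ₗ ((dV ∘ₗ (δ ∘ₗ A) + (δ ∘ₗ A) ∘ₗ dV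
        + (δ ∘ₗ A) ∘ₗ ((ι ∘ₗ π) ∘ₗ (δ ∘ₗ A))) ∘ₗ ι) := by
        rw [hdW]
        simp only [LinearMap.add_comp, LinearMap.comp_add, LinearMap.comp_assoc, zero_add]
    _ = 0 := by rw [key2]; simp
end

section
/- With the SDR datum, perturbation, and perturbed maps as defined in the context, the perturbed projection is a chain map: d̃_W ∘ π̃ = π̃ ∘ d̃_V. -/
theorem reassoc2_of' {R : Type*} [CommRing R] {A B C D E : Type*}
    [AddCommGroup A] [Module R A] [AddCommGroup B] [Module R B]
    [AddCommGroup C] [Module R C] [AddCommGroup D] [Module R D]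
    [AddCommGroup E] [Module R E]
    {f : D →ₗ[R] E} {g : C →ₗ[R] D} {e : B →ₗ[R] C} {c : B →ₗ[R] E}
    (h : f ∘ₗ g ∘ₗ e = c) (k : A →ₗ[R] B) : f ∘ₗ g ∘ₗ e ∘ₗ k = c ∘ₗ k := by
  rw [← LinearMap.comp_assoc k e g, ← LinearMap.comp_assoc k (g ∘ₗ e) f, h]

theorem reassoc_of' {R : Type*} [CommRing R] {A B C D : Type*}
    [AddCommGroup A] [Module R A] [AddCommGroup B] [Module R B]
    [AddCommGroup C] [Module R C] [AddCommGroup D] [Module R D]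
    {f : C →ₗ[R] D} {g : B →ₗ[R] C} {e : B →ₗ[R] D}
    (h : f ∘ₗ g = e) (k : A →ₗ[R] B) : f ∘ₗ g ∘ₗ k = e ∘ₗ k := by
  rw [← LinearMap.comp_assoc, h]

/-- Homological perturbation lemma (single-space perturbation version), conclusion 2. -/
theorem stmt_2 {R V W : Type*} [CommRing R]
    [AddCommGroup V] [Module R V] [AddCommGroup W] [Module R W]
    (dV : V →ₗ[R] V) (dW : W →ₗ[R] W)
    (π : V →ₗ[R] W) (ι : W →ₗ[R] V) (η : V →ₗ[R] V)
    (hdV : dV ∘ₗ dV = 0) (hdW : dW ∘ₗ dW = 0)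
    (hπ : π ∘ₗ dV = dW ∘ₗ π) (hι : dV ∘ₗ ι = ι ∘ₗ dW)
    (hHK : ι ∘ₗ π - LinearMap.id = η ∘ₗ dV + dV ∘ₗ η)
    (hπι : π ∘ₗ ι = LinearMap.id)
    (hηη : η ∘ₗ η = 0) (hηι : η ∘ₗ ι = 0) (hπη : π ∘ₗ η = 0)
    (δ : V →ₗ[R] V)
    (hpert : (dV + δ) ∘ₗ (dV + δ) = 0)
    (A : V →ₗ[R] V)
    (hA₁ : A ∘ₗ (LinearMap.id - η ∘ₗ δ) = LinearMap.id)
    (hA₂ : (LinearMap.id - η ∘ₗ δ) ∘ₗ A = LinearMap.id)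
    (dV' : V →ₗ[R] V) (hdV' : dV' = dV + δ)
    (dW' : W →ₗ[R] W) (hdW' : dW' = dW + π ∘ₗ δ ∘ₗ A ∘ₗ ι)
    (ι' : W →ₗ[R] V) (hι' : ι' = ι + η ∘ₗ δ ∘ₗ A ∘ₗ ι)
    (π' : V →ₗ[R] W) (hπ' : π' = π + π ∘ₗ δ ∘ₗ A ∘ₗ η)
    (η' : V →ₗ[R] V) (hη' : η' = η + η ∘ₗ δ ∘ₗ A ∘ₗ η) :
    dW' ∘ₗ π' = π' ∘ₗ dV' := by
  subst hdV' hdW' hι' hπ' hη'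
  -- derived relations
  have hιπ : ι ∘ₗ π = η ∘ₗ dV + dV ∘ₗ η + LinearMap.id := by
    rw [sub_eq_iff_eq_add] at hHK; rw [hHK]
  have hdWπ : dW ∘ₗ π = π ∘ₗ dV := hπ.symm
  have hAηδ : A ∘ₗ η ∘ₗ δ = A - LinearMap.id := by
    have := hA₁
    rw [LinearMap.comp_sub, LinearMap.comp_id, sub_eq_iff_eq_add] at this
    rw [← LinearMap.comp_assoc] at this ⊢
    rw [eq_sub_iff_add_eq, add_comm, ← this]
  have hηδA : (η ∘ₗ δ) ∘ₗ A = A - LinearMap.id := by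
    have := hA₂
    rw [LinearMap.sub_comp, LinearMap.id_comp, sub_eq_iff_eq_add] at this
    rw [eq_sub_iff_add_eq, add_comm, ← this]
  have hηδA' : η ∘ₗ δ ∘ₗ A = A - LinearMap.id := by
    rw [← LinearMap.comp_assoc]; exact hηδA
  have hdVδ : dV ∘ₗ δ = -(δ ∘ₗ dV) - δ ∘ₗ δ := by
    have := hpert
    rw [LinearMap.add_comp, LinearMap.comp_add, LinearMap.comp_add, hdV] at this
    rw [zero_add] at this
    linear_combination (norm := abel) this
  simp only [LinearMap.add_comp, LinearMap.comp_add, LinearMap.sub_comp,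
    LinearMap.comp_sub, LinearMap.neg_comp, LinearMap.comp_neg,
    LinearMap.zero_comp, LinearMap.comp_zero, LinearMap.id_comp,
    LinearMap.comp_id, LinearMap.comp_assoc,
    hdWπ, reassoc_of' hdWπ, hι, reassoc_of' hι, hιπ, reassoc_of' hιπ,
    hπι, reassoc_of' hπι, hηη, reassoc_of' hηη, hηι, reassoc_of' hηι,
    hπη, reassoc_of' hπη, hdV, reassoc_of' hdV, hdW, reassoc_of' hdW,
    hAηδ, reassoc_of' hAηδ, hηδA', reassoc_of' hηδA', hdVδ, reassoc_of' hdVδ,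
    reassoc2_of' hAηδ, reassoc2_of' hηδA']
  abel
end

section
/- With the SDR datum, perturbation, and perturbed maps as defined in the context, the perturbed inclusion is a chain map: ι̃ ∘ d̃_W = d̃_V ∘ ι̃. -/
private lemma end_key {R V : Type*} [CommRing R] [AddCommGroup V] [Module R V]
    (dV η δ A P : Module.End R V)
    (e1 : η * δ * A = A - 1)
    (e2 : A * (η * δ) = A - 1)
    (e3 : dV * δ + δ * dV + δ * δ = 0)
    (hP : P = 1 + η * dV + dV * η) :
    A * dV + A * (P * (δ * A)) = dV * A + δ * A := by
  subst hP
  linear_combination (norm := noncomm_ring) A*dV*e1 - e2*(dV*A) - e2*(δ*A) + A*η*e3*A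

/-- Homological perturbation lemma (single-space perturbation version), conclusion 3. -/
theorem stmt_3 {R V W : Type*} [CommRing R]
    [AddCommGroup V] [Module R V] [AddCommGroup W] [Module R W]
    (dV : V →ₗ[R] V) (dW : W →ₗ[R] W)
    (π : V →ₗ[R] W) (ι : W →ₗ[R] V) (η : V →ₗ[R] V)
    (hdV : dV ∘ₗ dV = 0) (hdW : dW ∘ₗ dW = 0)
    (hπ : π ∘ₗ dV = dW ∘ₗ π) (hι : dV ∘ₗ ι = ι ∘ₗ dW)
    (hHK : ι ∘ₗ π - LinearMap.id = η ∘ₗ dV + dV ∘ₗ η)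
    (hπι : π ∘ₗ ι = LinearMap.id)
    (hηη : η ∘ₗ η = 0) (hηι : η ∘ₗ ι = 0) (hπη : π ∘ₗ η = 0)
    (δ : V →ₗ[R] V)
    (hpert : (dV + δ) ∘ₗ (dV + δ) = 0)
    (A : V →ₗ[R] V)
    (hA₁ : A ∘ₗ (LinearMap.id - η ∘ₗ δ) = LinearMap.id)
    (hA₂ : (LinearMap.id - η ∘ₗ δ) ∘ₗ A = LinearMap.id)
    (dV' : V →ₗ[R] V) (hdV' : dV' = dV + δ)
    (dW' : W →ₗ[R] W) (hdW' : dW' = dW + π ∘ₗ δ ∘ₗ A ∘ₗ ι)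
    (ι' : W →ₗ[R] V) (hι' : ι' = ι + η ∘ₗ δ ∘ₗ A ∘ₗ ι)
    (π' : V →ₗ[R] W) (hπ' : π' = π + π ∘ₗ δ ∘ₗ A ∘ₗ η)
    (η' : V →ₗ[R] V) (hη' : η' = η + η ∘ₗ δ ∘ₗ A ∘ₗ η) :
    ι' ∘ₗ dW' = dV' ∘ₗ ι' := by
  -- translate hypotheses on V-endomorphisms into the ring `Module.End R V`
  have e1 : η * δ * A = A - 1 := by
    have h := hA₂
    simp only [LinearMap.sub_comp, LinearMap.id_comp] at h
    have : (η ∘ₗ δ) ∘ₗ A = A - LinearMap.id := by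
      rw [eq_sub_iff_add_eq, ← h]; abel
    simpa [Module.End.mul_eq_comp, Module.End.one_eq_id, LinearMap.comp_assoc] using this
  have e2 : A * (η * δ) = A - 1 := by
    have h := hA₁
    simp only [LinearMap.comp_sub, LinearMap.comp_id] at h
    have : A ∘ₗ (η ∘ₗ δ) = A - LinearMap.id := by
      rw [eq_sub_iff_add_eq, ← h]; abel
    simpa [Module.End.mul_eq_comp, Module.End.one_eq_id] using this
  have e3 : dV * δ + δ * dV + δ * δ = 0 := by
    have h := hpert
    simp only [LinearMap.add_comp, LinearMap.comp_add] at h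
    have : dV ∘ₗ δ + δ ∘ₗ dV + δ ∘ₗ δ = 0 := by
      rw [← h, hdV]; abel
    simpa [Module.End.mul_eq_comp] using this
  have hP : (ι ∘ₗ π : Module.End R V) = 1 + η * dV + dV * η := by
    have h : ι ∘ₗ π = LinearMap.id + (η ∘ₗ dV + dV ∘ₗ η) := by
      rw [← hHK]; abel
    simpa [Module.End.mul_eq_comp, Module.End.one_eq_id, add_assoc] using h
  have key : A * dV + A * ((ι ∘ₗ π) * (δ * A)) = dV * A + δ * A :=
    end_key dV η δ A (ι ∘ₗ π) e1 e2 e3 hP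
  have keyc : A ∘ₗ dV + A ∘ₗ ((ι ∘ₗ π) ∘ₗ (δ ∘ₗ A)) = dV ∘ₗ A + δ ∘ₗ A := by
    simpa [Module.End.mul_eq_comp] using key
  -- ι' = A ∘ₗ ι
  have hA : A = LinearMap.id + η ∘ₗ δ ∘ₗ A := by
    have h2 : A = 1 + η * δ * A := by
      have h := e1.symm
      rwa [sub_eq_iff_eq_add'] at h
    simpa [Module.End.mul_eq_comp, Module.End.one_eq_id, LinearMap.comp_assoc] using h2
  have hι'' : ι' = A ∘ₗ ι := by
    rw [hι']
    ext w
    have h := LinearMap.congr_fun hA (ι w)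
    simp only [LinearMap.comp_apply, LinearMap.add_apply, LinearMap.coe_comp,
      Function.comp_apply, LinearMap.id_apply] at h ⊢
    conv_rhs => rw [h]
  subst hdV' hdW'
  rw [hι'']
  ext w
  have h1 := LinearMap.congr_fun keyc (ι w)
  have h2 := LinearMap.congr_fun hι w
  simp only [LinearMap.comp_apply, LinearMap.add_apply, LinearMap.coe_comp,
    Function.comp_apply, map_add] at h1 h2 ⊢
  rw [← h2]
  exact h1
end

section
/- With the SDR datum, perturbation, and perturbed maps as defined in the context, the perturbed Hodge–Kodaira decomposition holds: η̃ ∘ d̃_V + d̃_V ∘ η̃ = ι̃ ∘ π̃ − id_V. -/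
/-- Homological perturbation lemma (single-space perturbation version), conclusion 4. -/
theorem stmt_4 {R V W : Type*} [CommRing R]
    [AddCommGroup V] [Module R V] [AddCommGroup W] [Module R W]
    (dV : V →ₗ[R] V) (dW : W →ₗ[R] W)
    (π : V →ₗ[R] W) (ι : W →ₗ[R] V) (η : V →ₗ[R] V)
    (hdV : dV ∘ₗ dV = 0) (hdW : dW ∘ₗ dW = 0)
    (hπ : π ∘ₗ dV = dW ∘ₗ π) (hι : dV ∘ₗ ι = ι ∘ₗ dW)
    (hHK : ι ∘ₗ π - LinearMap.id = η ∘ₗ dV + dV ∘ₗ η)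
    (hπι : π ∘ₗ ι = LinearMap.id)
    (hηη : η ∘ₗ η = 0) (hηι : η ∘ₗ ι = 0) (hπη : π ∘ₗ η = 0)
    (δ : V →ₗ[R] V)
    (hpert : (dV + δ) ∘ₗ (dV + δ) = 0)
    (A : V →ₗ[R] V)
    (hA₁ : A ∘ₗ (LinearMap.id - η ∘ₗ δ) = LinearMap.id)
    (hA₂ : (LinearMap.id - η ∘ₗ δ) ∘ₗ A = LinearMap.id)
    (dV' : V →ₗ[R] V) (hdV' : dV' = dV + δ)
    (dW' : W →ₗ[R] W) (hdW' : dW' = dW + π ∘ₗ δ ∘ₗ A ∘ₗ ι)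
    (ι' : W →ₗ[R] V) (hι' : ι' = ι + η ∘ₗ δ ∘ₗ A ∘ₗ ι)
    (π' : V →ₗ[R] W) (hπ' : π' = π + π ∘ₗ δ ∘ₗ A ∘ₗ η)
    (η' : V →ₗ[R] V) (hη' : η' = η + η ∘ₗ δ ∘ₗ A ∘ₗ η) :
    η' ∘ₗ dV' + dV' ∘ₗ η' = ι' ∘ₗ π' - LinearMap.id := by
  -- relations in the endomorphism ring
  have z1 : η * δ * A - (A - 1) = (0 : Module.End R V) := by
    have h := hA₂
    simp only [← Module.End.mul_eq_comp, ← Module.End.one_eq_id] at h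
    have e : η * δ * A - (A - 1) = -((1 - η * δ) * A - 1) := by noncomm_ring
    rw [e, h, sub_self, neg_zero]
  have z2 : A * (η * δ) - (A - 1) = (0 : Module.End R V) := by
    have h := hA₁
    simp only [← Module.End.mul_eq_comp, ← Module.End.one_eq_id] at h
    have e : A * (η * δ) - (A - 1) = -(A * (1 - η * δ) - 1) := by noncomm_ring
    rw [e, h, sub_self, neg_zero]
  have z3 : dV * dV = (0 : Module.End R V) := by
    rw [Module.End.mul_eq_comp]; exact hdV
  have z4 : (dV + δ) * (dV + δ) = (0 : Module.End R V) := by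
    rw [Module.End.mul_eq_comp]; exact hpert
  have hq : ι ∘ₗ π = η ∘ₗ dV + dV ∘ₗ η + LinearMap.id := by
    rw [← hHK]; abel
  have hcross : (ι + η ∘ₗ δ ∘ₗ A ∘ₗ ι) ∘ₗ (π + π ∘ₗ δ ∘ₗ A ∘ₗ η)
      = (ι ∘ₗ π) + (ι ∘ₗ π) ∘ₗ (δ ∘ₗ A ∘ₗ η) + (η ∘ₗ δ ∘ₗ A) ∘ₗ (ι ∘ₗ π)
        + (η ∘ₗ δ ∘ₗ A) ∘ₗ ((ι ∘ₗ π) ∘ₗ (δ ∘ₗ A ∘ₗ η)) := by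
    simp only [LinearMap.add_comp, LinearMap.comp_add, LinearMap.comp_assoc]
    abel
  have cert :
      (η * δ * A - (A - 1)) * (η * δ)
      + δ * (η * δ * A - (A - 1)) * η
      - (η * δ * A - (A - 1))
      - (η * δ * A - (A - 1)) * (dV * η)
      - (η * δ * A - (A - 1)) * (δ * A * η)
      - (η * δ * A - (A - 1)) * (η * dV * δ * A * η)
      - (η * δ * A - (A - 1)) * (dV * η * δ * A * η)
      + (A * (η * δ) - (A - 1))
      - A * dV * (η * δ * A - (A - 1)) * η
      + dV * (η * δ * A - (A - 1)) * η
      + (A * (η * δ) - (A - 1)) * ((δ + dV) * A * η)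
      - A * η * ((dV + δ) * (dV + δ) - dV * dV) * (A * η)
      = (0 : Module.End R V) := by
    rw [z1, z2, z3, z4]; noncomm_ring
  rw [hη', hdV', hι', hπ', hcross, hq]
  simp only [← Module.End.mul_eq_comp, ← Module.End.one_eq_id]
  rw [← sub_eq_zero, ← cert]
  noncomm_ring
end

section
/- With the SDR datum, perturbation, and perturbed maps as defined in the context, the perturbed projection and inclusion satisfy the deformation-retract condition: π̃ ∘ ι̃ = id_W. -/
/-- Homological perturbation lemma (single-space perturbation version), conclusion 5. -/
theorem stmt_5 {R V W : Type*} [CommRing R]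
    [AddCommGroup V] [Module R V] [AddCommGroup W] [Module R W]
    (dV : V →ₗ[R] V) (dW : W →ₗ[R] W)
    (π : V →ₗ[R] W) (ι : W →ₗ[R] V) (η : V →ₗ[R] V)
    (hdV : dV ∘ₗ dV = 0) (hdW : dW ∘ₗ dW = 0)
    (hπ : π ∘ₗ dV = dW ∘ₗ π) (hι : dV ∘ₗ ι = ι ∘ₗ dW)
    (hHK : ι ∘ₗ π - LinearMap.id = η ∘ₗ dV + dV ∘ₗ η)
    (hπι : π ∘ₗ ι = LinearMap.id)
    (hηη : η ∘ₗ η = 0) (hηι : η ∘ₗ ι = 0) (hπη : π ∘ₗ η = 0)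
    (δ : V →ₗ[R] V)
    (hpert : (dV + δ) ∘ₗ (dV + δ) = 0)
    (A : V →ₗ[R] V)
    (hA₁ : A ∘ₗ (LinearMap.id - η ∘ₗ δ) = LinearMap.id)
    (hA₂ : (LinearMap.id - η ∘ₗ δ) ∘ₗ A = LinearMap.id)
    (dV' : V →ₗ[R] V) (hdV' : dV' = dV + δ)
    (dW' : W →ₗ[R] W) (hdW' : dW' = dW + π ∘ₗ δ ∘ₗ A ∘ₗ ι)
    (ι' : W →ₗ[R] V) (hι' : ι' = ι + η ∘ₗ δ ∘ₗ A ∘ₗ ι)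
    (π' : V →ₗ[R] W) (hπ' : π' = π + π ∘ₗ δ ∘ₗ A ∘ₗ η)
    (η' : V →ₗ[R] V) (hη' : η' = η + η ∘ₗ δ ∘ₗ A ∘ₗ η) :
    π' ∘ₗ ι' = LinearMap.id := by
  subst hπ' hι'
  ext w
  simp only [LinearMap.comp_apply, LinearMap.add_apply, LinearMap.id_apply,
    LinearMap.map_add]
  have h1 : ∀ x, π (η x) = 0 := LinearMap.ext_iff.mp hπη
  have h2 : ∀ x, η (ι x) = 0 := LinearMap.ext_iff.mp hηι
  have h3 : ∀ x, π (ι x) = x := LinearMap.ext_iff.mp hπι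
  have h4 : ∀ x, η (η x) = 0 := LinearMap.ext_iff.mp hηη
  simp [h1, h2, h3, h4]
end

section
/- With the SDR datum, perturbation, and perturbed maps as defined in the context, the first perturbed annihilation condition holds: η̃ ∘ ι̃ = 0. -/
/-- Homological perturbation lemma (single-space perturbation version), conclusion 7. -/
theorem stmt_7 {R V W : Type*} [CommRing R]
    [AddCommGroup V] [Module R V] [AddCommGroup W] [Module R W]
    (dV : V →ₗ[R] V) (dW : W →ₗ[R] W)
    (π : V →ₗ[R] W) (ι : W →ₗ[R] V) (η : V →ₗ[R] V)
    (hdV : dV ∘ₗ dV = 0) (hdW : dW ∘ₗ dW = 0)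
    (hπ : π ∘ₗ dV = dW ∘ₗ π) (hι : dV ∘ₗ ι = ι ∘ₗ dW)
    (hHK : ι ∘ₗ π - LinearMap.id = η ∘ₗ dV + dV ∘ₗ η)
    (hπι : π ∘ₗ ι = LinearMap.id)
    (hηη : η ∘ₗ η = 0) (hηι : η ∘ₗ ι = 0) (hπη : π ∘ₗ η = 0)
    (δ : V →ₗ[R] V)
    (hpert : (dV + δ) ∘ₗ (dV + δ) = 0)
    (A : V →ₗ[R] V)
    (hA₁ : A ∘ₗ (LinearMap.id - η ∘ₗ δ) = LinearMap.id)
    (hA₂ : (LinearMap.id - η ∘ₗ δ) ∘ₗ A = LinearMap.id)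
    (dV' : V →ₗ[R] V) (hdV' : dV' = dV + δ)
    (dW' : W →ₗ[R] W) (hdW' : dW' = dW + π ∘ₗ δ ∘ₗ A ∘ₗ ι)
    (ι' : W →ₗ[R] V) (hι' : ι' = ι + η ∘ₗ δ ∘ₗ A ∘ₗ ι)
    (π' : V →ₗ[R] W) (hπ' : π' = π + π ∘ₗ δ ∘ₗ A ∘ₗ η)
    (η' : V →ₗ[R] V) (hη' : η' = η + η ∘ₗ δ ∘ₗ A ∘ₗ η) :
    η' ∘ₗ ι' = 0 := by
  have e1 : ∀ x, η (ι x) = 0 := fun x => congrFun (congrArg DFunLike.coe hηι) x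
  have e2 : ∀ x, η (η x) = 0 := fun x => congrFun (congrArg DFunLike.coe hηη) x
  subst hη' hι'
  ext w
  simp [LinearMap.comp_apply, e1, e2]
end

section
/- With the SDR datum, perturbation, and perturbed maps as defined in the context, the second perturbed annihilation condition holds: π̃ ∘ η̃ = 0. -/
/-- Homological perturbation lemma (single-space perturbation version), conclusion 8. -/
theorem stmt_8 {R V W : Type*} [CommRing R]
    [AddCommGroup V] [Module R V] [AddCommGroup W] [Module R W]
    (dV : V →ₗ[R] V) (dW : W →ₗ[R] W)
    (π : V →ₗ[R] W) (ι : W →ₗ[R] V) (η : V →ₗ[R] V)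
    (hdV : dV ∘ₗ dV = 0) (hdW : dW ∘ₗ dW = 0)
    (hπ : π ∘ₗ dV = dW ∘ₗ π) (hι : dV ∘ₗ ι = ι ∘ₗ dW)
    (hHK : ι ∘ₗ π - LinearMap.id = η ∘ₗ dV + dV ∘ₗ η)
    (hπι : π ∘ₗ ι = LinearMap.id)
    (hηη : η ∘ₗ η = 0) (hηι : η ∘ₗ ι = 0) (hπη : π ∘ₗ η = 0)
    (δ : V →ₗ[R] V)
    (hpert : (dV + δ) ∘ₗ (dV + δ) = 0)
    (A : V →ₗ[R] V)
    (hA₁ : A ∘ₗ (LinearMap.id - η ∘ₗ δ) = LinearMap.id)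
    (hA₂ : (LinearMap.id - η ∘ₗ δ) ∘ₗ A = LinearMap.id)
    (dV' : V →ₗ[R] V) (hdV' : dV' = dV + δ)
    (dW' : W →ₗ[R] W) (hdW' : dW' = dW + π ∘ₗ δ ∘ₗ A ∘ₗ ι)
    (ι' : W →ₗ[R] V) (hι' : ι' = ι + η ∘ₗ δ ∘ₗ A ∘ₗ ι)
    (π' : V →ₗ[R] W) (hπ' : π' = π + π ∘ₗ δ ∘ₗ A ∘ₗ η)
    (η' : V →ₗ[R] V) (hη' : η' = η + η ∘ₗ δ ∘ₗ A ∘ₗ η) :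
    π' ∘ₗ η' = 0 := by
  subst hπ' hη'
  ext x
  have h1 : ∀ v : V, π (η v) = 0 := fun v => by simpa using LinearMap.congr_fun hπη v
  have h2 : ∀ v : V, η (η v) = 0 := fun v => by simpa using LinearMap.congr_fun hηη v
  simp [LinearMap.comp_apply, h1, h2]
end
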